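/- arXiv:1912.03574 — 2 statements merged into one kernel-verified Lean document; each statement's English description precedes it below -/
import Mathlib

section
/- Let X and Y be connected pointed CW-complexes and let π₂ : X × Y → Y be the projection onto the second factor. Then the homotopy cofibre of π₂ is homotopy equivalent to ΣX ∨ (X ∗ Y), the wedge of the suspension of X with the join of X and Y. -/
noncomputable section

inductive JoinRel (X Y : Type) : X × Y × unitInterval → X × Y × unitInterval → Prop
  | zero (x : X) (y y' : Y) : JoinRel X Y (x, y, 0) (x, y', 0)
  | one (x x' : X) (y : Y) : JoinRel X Y (x, y, 1) (x', y, 1)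

/-- The topological join `X ∗ Y`. -/
def Join (X Y : Type) [TopologicalSpace X] [TopologicalSpace Y] : Type :=
  Quot (JoinRel X Y)

instance (X Y : Type) [TopologicalSpace X] [TopologicalSpace Y] :
    TopologicalSpace (Join X Y) :=
  inferInstanceAs (TopologicalSpace (Quot _))

/-- A basepoint for the join. -/
def Join.pt {X Y : Type} [TopologicalSpace X] [TopologicalSpace Y] (x : X) (y : Y) :
    Join X Y := Quot.mk _ (x, y, 0)

/-- Relation generating the (unreduced) suspension. -/
inductive SuspRel (X : Type) : X × unitInterval → X × unitInterval → Prop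
  | zero (x x' : X) : SuspRel X (x, 0) (x', 0)
  | one (x x' : X) : SuspRel X (x, 1) (x', 1)

/-- The (unreduced) suspension `ΣX`. -/
def Susp (X : Type) [TopologicalSpace X] : Type := Quot (SuspRel X)

instance (X : Type) [TopologicalSpace X] : TopologicalSpace (Susp X) :=
  inferInstanceAs (TopologicalSpace (Quot _))

def Susp.pt {X : Type} [TopologicalSpace X] (x : X) : Susp X := Quot.mk _ (x, 0)

/-- Relation generating the mapping cone of `f : X → Y`. -/
inductive ConeRel {X Y : Type} (f : X → Y) :
    (X × unitInterval) ⊕ Y → (X × unitInterval) ⊕ Y → Prop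
  | base (x x' : X) : ConeRel f (Sum.inl (x, 0)) (Sum.inl (x', 0))
  | glue (x : X) : ConeRel f (Sum.inl (x, 1)) (Sum.inr (f x))

/-- The mapping cone (homotopy cofibre) of `f : X → Y`. -/
def MappingCone {X Y : Type} [TopologicalSpace X] [TopologicalSpace Y] (f : X → Y) : Type :=
  Quot (ConeRel f)

instance {X Y : Type} [TopologicalSpace X] [TopologicalSpace Y] (f : X → Y) :
    TopologicalSpace (MappingCone f) :=
  inferInstanceAs (TopologicalSpace (Quot _))

/-- The cone point as basepoint of a mapping cone. -/
def MappingCone.pt {X Y : Type} [TopologicalSpace X] [TopologicalSpace Y] (f : X → Y)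
    (x : X) : MappingCone f := Quot.mk _ (Sum.inl (x, 0))

/-- The half-smash product `X ⋉ Y = (X × Y)/(X × {y₀})`. -/
def LHalfSmash (X Y : Type) [TopologicalSpace X] [TopologicalSpace Y] (y₀ : Y) : Type :=
  Quot (fun a b : X × Y => a.2 = y₀ ∧ b.2 = y₀)

instance (X Y : Type) [TopologicalSpace X] [TopologicalSpace Y] (y₀ : Y) :
    TopologicalSpace (LHalfSmash X Y y₀) := inferInstanceAs (TopologicalSpace (Quot _))

/-- The half-smash product `X ⋊ Y = (X × Y)/({x₀} × Y)`. -/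
def RHalfSmash (X Y : Type) [TopologicalSpace X] [TopologicalSpace Y] (x₀ : X) : Type :=
  Quot (fun a b : X × Y => a.1 = x₀ ∧ b.1 = x₀)

instance (X Y : Type) [TopologicalSpace X] [TopologicalSpace Y] (x₀ : X) :
    TopologicalSpace (RHalfSmash X Y x₀) := inferInstanceAs (TopologicalSpace (Quot _))

/-- Wedge of a family of pointed subsets: collapse the set `B` of basepoints to a point. -/
def PtWedge (T : Type) [TopologicalSpace T] (B : Set T) : Type :=
  Quot (fun a b : T => a ∈ B ∧ b ∈ B)

instance (T : Type) [TopologicalSpace T] (B : Set T) : TopologicalSpace (PtWedge T B) :=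
  inferInstanceAs (TopologicalSpace (Quot _))

/-- Binary wedge `X ∨ Y`. -/
def Wedge (X Y : Type) [TopologicalSpace X] [TopologicalSpace Y] (x₀ : X) (y₀ : Y) : Type :=
  Quot (fun a b : X ⊕ Y => (a = Sum.inl x₀ ∨ a = Sum.inr y₀) ∧ (b = Sum.inl x₀ ∨ b = Sum.inr y₀))

instance (X Y : Type) [TopologicalSpace X] [TopologicalSpace Y] (x₀ : X) (y₀ : Y) :
    TopologicalSpace (Wedge X Y x₀ y₀) := inferInstanceAs (TopologicalSpace (Quot _))

def Wedge.pt (X Y : Type) [TopologicalSpace X] [TopologicalSpace Y] (x₀ : X) (y₀ : Y) :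
    Wedge X Y x₀ y₀ := Quot.mk _ (Sum.inl x₀)

/-!
The cofibre of `π₂` is the join `X ∗ Y` with its `X`-end crushed to a point. Sliding the cone
coordinate over the half of the join next to `X` shows that it is homotopy equivalent to the
mapping cone of the inclusion `ι : X → X ∗ Y` of that end. But `ι` is null-homotopic (it moves
inside the cone `X ∗ {y₀}`), mapping cones of homotopic maps are homotopy equivalent, and the
mapping cone of a constant map `X → X ∗ Y` is, on the nose, `ΣX ∨ (X ∗ Y)`.
-/

open ContinuousMap unitInterval

def projI (r : ℝ) : I := Set.projIcc 0 1 zero_le_one r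

@[fun_prop]
lemma continuous_projI : Continuous projI := continuous_projIcc (h := zero_le_one)

lemma projI_of_le_zero {r : ℝ} (h : r ≤ 0) : projI r = 0 := Set.projIcc_of_le_left _ h

lemma projI_of_one_le {r : ℝ} (h : 1 ≤ r) : projI r = 1 := Set.projIcc_of_right_le _ h

@[simp] lemma projI_coe (s : I) : projI s = s := Set.projIcc_val _ s

lemma coe_projI {r : ℝ} (h₀ : 0 ≤ r) (h₁ : r ≤ 1) : (projI r : ℝ) = r :=
  congrArg Subtype.val (Set.projIcc_of_mem _ ⟨h₀, h₁⟩)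

lemma symm_projI (r : ℝ) : σ (projI r) = projI (1 - r) := symm_projIcc r

def symmSnd {A : Type} [TopologicalSpace A] : C(A × I, A × I) :=
  ⟨fun p => (p.1, σ p.2), by fun_prop⟩

@[simp] lemma symmSnd_apply {A : Type} [TopologicalSpace A] (p : A × I) :
    symmSnd p = (p.1, σ p.2) := rfl

section Gluing

variable {S T Z : Type} [TopologicalSpace S] [TopologicalSpace T] [TopologicalSpace Z]

def ContinuousMap.quotMk (r : S → S → Prop) : C(S, Quot r) := ⟨Quot.mk r, continuous_quot_mk⟩

def ContinuousMap.quotLift {r : S → S → Prop} (g : C(S, Z)) (hg : ∀ a b, r a b → g a = g b) :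
    C(Quot r, Z) :=
  ⟨Quot.lift g hg, continuous_quot_lift _ g.continuous⟩

def ContinuousMap.Homotopy.quotLift {r : S → S → Prop} {g₀ g₁ : C(Quot r, Z)}
    (G : (g₀.comp (quotMk r)).Homotopy (g₁.comp (quotMk r)))
    (hG : ∀ t a b, r a b → G (t, a) = G (t, b)) : g₀.Homotopy g₁ where
  toFun p := Quot.lift (fun a => G (p.1, a)) (hG p.1) p.2
  continuous_toFun := isQuotientMap_quot_mk.continuous_lift_prod_right G.continuous
  map_zero_left := Quot.ind G.apply_zero
  map_one_left := Quot.ind G.apply_one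

def ContinuousMap.Homotopy.sumElim {g₀ g₁ : C(S ⊕ T, Z)}
    (G : (g₀.comp ⟨Sum.inl, continuous_inl⟩).Homotopy (g₁.comp ⟨Sum.inl, continuous_inl⟩))
    (H : (g₀.comp ⟨Sum.inr, continuous_inr⟩).Homotopy (g₁.comp ⟨Sum.inr, continuous_inr⟩)) :
    g₀.Homotopy g₁ where
  toFun p := Sum.elim (fun s => G (p.1, s)) (fun t => H (p.1, t)) p.2
  continuous_toFun := by
    refine ((G.continuous.sumElim H.continuous).comp
      (Homeomorph.prodSumDistrib (X := I) (Y := S) (Z := T)).continuous).congr ?_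
    rintro ⟨t, s | s⟩ <;> rfl
  map_zero_left := by rintro (s | t) <;> simp
  map_one_left := by rintro (s | t) <;> simp

end Gluing

namespace MappingCone

section

variable {A B Z : Type} [TopologicalSpace A] [TopologicalSpace B] [TopologicalSpace Z]
  {f : A → B}

def inl (f : A → B) : C(A × I, MappingCone f) := (quotMk _).comp ⟨Sum.inl, continuous_inl⟩

def inr (f : A → B) : C(B, MappingCone f) := (quotMk _).comp ⟨Sum.inr, continuous_inr⟩

lemma inl_zero (a a' : A) : inl f (a, 0) = inl f (a', 0) := Quot.sound (ConeRel.base a a')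

lemma inl_one (a : A) : inl f (a, 1) = inr f (f a) := Quot.sound (ConeRel.glue a)

@[elab_as_elim]
lemma ind {P : MappingCone f → Prop} (inl : ∀ p, P (inl f p)) (inr : ∀ b, P (inr f b))
    (z : MappingCone f) : P z :=
  Quot.ind (Sum.rec inl inr) z

def desc (g : C(A × I, Z)) (h : C(B, Z)) (h₀ : ∀ a a', g (a, 0) = g (a', 0))
    (h₁ : ∀ a, g (a, 1) = h (f a)) : C(MappingCone f, Z) :=
  quotLift ⟨Sum.elim g h, g.continuous.sumElim h.continuous⟩ <| by
    rintro _ _ (⟨a, a'⟩ | a)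
    exacts [h₀ a a', h₁ a]

theorem homotopic_of_homotopies {F₀ F₁ : C(MappingCone f, Z)}
    (G : (F₀.comp (inl f)).Homotopy (F₁.comp (inl f)))
    (H : (F₀.comp (inr f)).Homotopy (F₁.comp (inr f)))
    (h₀ : ∀ t a a', G (t, a, 0) = G (t, a', 0)) (h₁ : ∀ t a, G (t, a, 1) = H (t, f a)) :
    F₀.Homotopic F₁ :=
  ⟨(Homotopy.sumElim G H).quotLift <| by
    rintro t _ _ (⟨a, a'⟩ | a)
    exacts [h₀ t a a', h₁ t a]⟩

end

section

variable {A B : Type} [TopologicalSpace A] [TopologicalSpace B] {f g : C(A, B)}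

/-- Up the cone on `f`, then along the track of `F` from `f a` to `g a`. -/
def ofHomotopy (F : f.Homotopy g) : C(MappingCone g, MappingCone f) :=
  desc
    { toFun p := if (p.2 : ℝ) ≤ 1 / 2 then inl f (p.1, projI (2 * p.2))
        else inr f (F (projI (2 * p.2 - 1), p.1))
      continuous_toFun := by
        refine Continuous.if_le (by fun_prop) (by fun_prop) (by fun_prop) continuous_const ?_
        intro p hp
        rw [hp, projI_of_one_le (by norm_num), projI_of_le_zero (by norm_num), inl_one,
          F.apply_zero] }
    (inr f)
    (fun a a' => by simpa [projI_of_le_zero] using inl_zero a a')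
    (fun a => by norm_num [projI_of_one_le])

lemma ofHomotopy_inl (F : f.Homotopy g) (a : A) (s : I) :
    ofHomotopy F (inl g (a, s)) = if (s : ℝ) ≤ 1 / 2 then inl f (a, projI (2 * s))
      else inr f (F (projI (2 * s - 1), a)) := rfl

@[simp] lemma ofHomotopy_inr (F : f.Homotopy g) (b : B) :
    ofHomotopy F (inr g b) = inr f b := rfl

/-- On the cone line through `a` the composite runs up the cone, along the track of `F` and back;
the homotopy retracts the detour along `F` into the cone. -/
def ofHomotopyCompSymmInl (F : f.Homotopy g) :
    (((ofHomotopy F).comp (ofHomotopy F.symm)).comp (inl f)).Homotopy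
      ((ContinuousMap.id _).comp (inl f)) where
  toFun q :=
    if 4 * (q.2.2 : ℝ) ≤ 1 + 3 * q.1 then inl f (q.2.1, projI (4 * q.2.2 / (1 + 3 * q.1)))
    else if 2 * (q.2.2 : ℝ) ≤ 1 + q.1 then inr f (F (projI (4 * q.2.2 - 1 - 3 * q.1), q.2.1))
    else inr f (F (projI (2 - 2 * q.2.2), q.2.1))
  continuous_toFun := by
    have hpos (τ : I) : (1 : ℝ) + 3 * τ ≠ 0 := by linarith [τ.2.1]
    refine Continuous.if_le ?_ (Continuous.if_le (by fun_prop) (by fun_prop) (by fun_prop)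
      (by fun_prop) ?_) (by fun_prop) (by fun_prop) ?_
    · exact (inl f).continuous.comp ((continuous_fst.comp continuous_snd).prodMk
        (continuous_projI.comp ((by fun_prop : Continuous fun q : I × A × I => 4 * (q.2.2 : ℝ)).div
          (by fun_prop) fun q => hpos q.1)))
    · intro q hq
      rw [show 4 * (q.2.2 : ℝ) - 1 - 3 * q.1 = 2 - 2 * q.2.2 by linarith]
    · intro q hq
      rw [if_pos (by linarith [q.1.2.2]), hq, div_self (hpos q.1), projI_of_one_le le_rfl,
        inl_one, sub_sub, sub_self, projI_of_le_zero le_rfl, F.apply_zero]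
  map_zero_left := by
    rintro ⟨a, s⟩
    simp only [comp_apply, ofHomotopy_inl, Set.Icc.coe_zero, mul_zero, add_zero, div_one,
      sub_zero]
    rcases le_or_gt (s : ℝ) (1 / 2) with hs | hs
    · rw [if_pos hs, ofHomotopy_inl, coe_projI (r := 2 * s) (by linarith [s.2.1]) (by linarith)]
      split_ifs <;> first | (exfalso; linarith) | ring_nf
    · rw [if_neg (by linarith), if_neg (by linarith), if_neg hs.not_ge, ofHomotopy_inr,
        Homotopy.symm_apply, symm_projI]
      ring_nf
  map_one_left := by
    rintro ⟨a, s⟩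
    simp only [Set.Icc.coe_one, if_pos (by linarith [s.2.2] : 4 * (s : ℝ) ≤ 1 + 3 * 1)]
    rw [show 4 * (s : ℝ) / (1 + 3 * 1) = s by ring, projI_coe]
    rfl

lemma ofHomotopyCompSymmInl_apply (F : f.Homotopy g) (t : I) (a : A) (s : I) :
    ofHomotopyCompSymmInl F (t, a, s) =
      if 4 * (s : ℝ) ≤ 1 + 3 * t then inl f (a, projI (4 * s / (1 + 3 * t)))
      else if 2 * (s : ℝ) ≤ 1 + t then inr f (F (projI (4 * s - 1 - 3 * t), a))
      else inr f (F (projI (2 - 2 * s), a)) := rfl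

theorem ofHomotopy_comp_ofHomotopy_symm_homotopic (F : f.Homotopy g) :
    ((ofHomotopy F).comp (ofHomotopy F.symm)).Homotopic (ContinuousMap.id _) := by
  refine homotopic_of_homotopies (ofHomotopyCompSymmInl F) (ContinuousMap.Homotopy.refl _)
    (fun t a a' => ?_) (fun t a => ?_)
  · have h : 4 * ((0 : I) : ℝ) ≤ 1 + 3 * t := by simp; linarith [t.2.1]
    rw [ofHomotopyCompSymmInl_apply, ofHomotopyCompSymmInl_apply, if_pos h, if_pos h,
      Set.Icc.coe_zero, mul_zero, zero_div, projI_of_le_zero le_rfl, inl_zero]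
  · rw [ofHomotopyCompSymmInl_apply, Set.Icc.coe_one]
    change _ = inr f (f a)
    rcases t.2.2.eq_or_lt with ht | ht
    · rw [if_pos (by rw [ht]; norm_num), ht, projI_of_one_le (by norm_num), inl_one]
    · rw [if_neg (by linarith), if_neg (by linarith), projI_of_le_zero (by norm_num),
        F.apply_zero]

def homotopyEquivOfHomotopy (F : f.Homotopy g) : MappingCone f ≃ₕ MappingCone g where
  toFun := ofHomotopy F.symm
  invFun := ofHomotopy F
  left_inv := ofHomotopy_comp_ofHomotopy_symm_homotopic F
  right_inv := by
    simpa only [Homotopy.symm_symm] using ofHomotopy_comp_ofHomotopy_symm_homotopic F.symm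

end

end MappingCone

namespace Susp

variable {X Z : Type} [TopologicalSpace X] [TopologicalSpace Z]

def mk : C(X × I, Susp X) := quotMk _

lemma mk_zero (x x' : X) : mk (x, 0) = mk (x', 0) := Quot.sound (SuspRel.zero x x')

lemma mk_one (x x' : X) : mk (x, 1) = mk (x', 1) := Quot.sound (SuspRel.one x x')

def desc (g : C(X × I, Z)) (h₀ : ∀ x x', g (x, 0) = g (x', 0))
    (h₁ : ∀ x x', g (x, 1) = g (x', 1)) : C(Susp X, Z) :=
  quotLift g <| by
    rintro _ _ (⟨x, x'⟩ | ⟨x, x'⟩)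
    exacts [h₀ x x', h₁ x x']

end Susp

namespace Wedge

variable {X Y Z : Type} [TopologicalSpace X] [TopologicalSpace Y] [TopologicalSpace Z]
  (x₀ : X) (y₀ : Y)

def inl : C(X, Wedge X Y x₀ y₀) := (quotMk _).comp ⟨Sum.inl, continuous_inl⟩

def inr : C(Y, Wedge X Y x₀ y₀) := (quotMk _).comp ⟨Sum.inr, continuous_inr⟩

lemma inl_eq_inr : inl x₀ y₀ x₀ = inr x₀ y₀ y₀ := Quot.sound ⟨Or.inl rfl, Or.inr rfl⟩

variable {x₀ y₀}

def desc (g : C(X, Z)) (h : C(Y, Z)) (hgh : g x₀ = h y₀) : C(Wedge X Y x₀ y₀, Z) :=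
  quotLift ⟨Sum.elim g h, g.continuous.sumElim h.continuous⟩ <| by
    have hb : ∀ w, (w = Sum.inl x₀ ∨ w = Sum.inr y₀) → Sum.elim g h w = h y₀ := by
      rintro _ (rfl | rfl)
      exacts [hgh, rfl]
    rintro v w ⟨hv, hw⟩
    exact (hb v hv).trans (hb w hw).symm

@[elab_as_elim]
lemma ind {P : Wedge X Y x₀ y₀ → Prop} (inl : ∀ x, P (inl x₀ y₀ x)) (inr : ∀ y, P (inr x₀ y₀ y))
    (w : Wedge X Y x₀ y₀) : P w :=
  Quot.ind (Sum.rec inl inr) w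

end Wedge

namespace MappingCone

variable {A B : Type} [TopologicalSpace A] [TopologicalSpace B]

/-- The cone point goes to the top of `ΣA` and the base `A × {1}` to its bottom, which is the
wedge point. -/
def constHomeomorph (a₀ : A) (b₀ : B) :
    MappingCone (fun _ : A => b₀) ≃ₜ Wedge (Susp A) B (Susp.pt a₀) b₀ where
  toFun := desc ((Wedge.inl _ _).comp (Susp.mk.comp symmSnd)) (Wedge.inr _ _)
    (fun a a' => by
      simpa only [comp_apply, symmSnd_apply, symm_zero] using
        congrArg (Wedge.inl (Susp.pt a₀) b₀) (Susp.mk_one a a'))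
    (fun a => by
      simpa only [comp_apply, symmSnd_apply, symm_one] using
        (congrArg (Wedge.inl (Susp.pt a₀) b₀) (Susp.mk_zero a a₀)).trans (Wedge.inl_eq_inr _ _))
  invFun := Wedge.desc
    (Susp.desc ((inl _).comp symmSnd)
      (fun a a' => by
        simpa only [comp_apply, symmSnd_apply, symm_zero] using
          (inl_one a).trans (inl_one a').symm)
      (fun a a' => by simpa only [comp_apply, symmSnd_apply, symm_one] using inl_zero a a'))
    (inr _) (by
      change inl _ (a₀, σ 0) = _
      rw [symm_zero]
      exact inl_one a₀)
  left_inv := ind (fun ⟨a, s⟩ => congrArg (fun s => inl _ (a, s)) (symm_symm s)) (fun _ => rfl)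
  right_inv := Wedge.ind (Quot.ind fun ⟨a, s⟩ =>
    congrArg (fun s => Wedge.inl _ b₀ (Susp.mk (a, s))) (symm_symm s)) (fun _ => rfl)
  continuous_toFun := (desc _ _ _ _).continuous
  continuous_invFun := (Wedge.desc _ _ _).continuous

end MappingCone

namespace Join

variable {X Y : Type} [TopologicalSpace X] [TopologicalSpace Y]

def mk : C(X × Y × I, Join X Y) := quotMk _

lemma mk_zero (x : X) (y y' : Y) : mk (x, y, 0) = mk (x, y', 0) :=
  Quot.sound (JoinRel.zero x y y')

lemma mk_one (x x' : X) (y : Y) : mk (x, y, 1) = mk (x', y, 1) := Quot.sound (JoinRel.one x x' y)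

def inl (y₀ : Y) : C(X, Join X Y) := mk.comp ⟨fun x => (x, y₀, 0), by fun_prop⟩

theorem inl_homotopic_const (x₀ : X) (y₀ : Y) :
    (inl y₀).Homotopic (ContinuousMap.const X (Join.pt x₀ y₀)) := by
  let H : (inl y₀).Homotopy (ContinuousMap.const X (mk (x₀, y₀, 1))) :=
    { toFun q := mk (q.2, y₀, q.1)
      map_zero_left _ := rfl
      map_one_left x := mk_one x x₀ y₀ }
  let p : Path (mk (x₀, y₀, 1)) (Join.pt x₀ y₀) :=
    { toFun t := mk (x₀, y₀, σ t)
      source' := by simp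
      target' := by simp; rfl }
  exact ⟨H.trans p.toHomotopyConst⟩

end Join

namespace MappingCone

variable {X Y : Type} [TopologicalSpace X] [TopologicalSpace Y]

def joinToSnd (y₀ : Y) :
    C(MappingCone (Join.inl (X := X) y₀), MappingCone (Prod.snd : X × Y → Y)) :=
  desc ((inl _).comp ⟨fun p => ((p.1, y₀), 0), by fun_prop⟩)
    (quotLift ((inl _).comp ⟨fun q => ((q.1, q.2.1), q.2.2), by fun_prop⟩) <| by
      rintro _ _ (⟨x, y, y'⟩ | ⟨x, x', y⟩)
      exacts [inl_zero _ _, (inl_one (x, y)).trans (inl_one (x', y)).symm])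
    (fun _ _ => inl_zero _ _) (fun _ => rfl)

lemma joinToSnd_inl (y₀ : Y) (x : X) (r : I) :
    joinToSnd y₀ (inl _ (x, r)) = inl _ ((x, y₀), 0) := rfl

lemma joinToSnd_inr_mk (y₀ : Y) (x : X) (y : Y) (t : I) :
    joinToSnd y₀ (inr _ (Join.mk (x, y, t))) = inl _ ((x, y), t) := rfl

/-- The lower half of the cone line through `(x, y)` runs up the cone on `X`, the upper half
along the join line from `x` to `y`. -/
def sndToJoin (x₀ : X) (y₀ : Y) :
    C(MappingCone (Prod.snd : X × Y → Y), MappingCone (Join.inl (X := X) y₀)) :=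
  desc
    { toFun p := if (p.2 : ℝ) ≤ 1 / 2 then inl _ (p.1.1, projI (2 * p.2))
        else inr _ (Join.mk (p.1.1, p.1.2, projI (2 * p.2 - 1)))
      continuous_toFun := by
        refine Continuous.if_le (by fun_prop) (by fun_prop) (by fun_prop) continuous_const ?_
        intro p hp
        rw [hp, projI_of_one_le (by norm_num), projI_of_le_zero (by norm_num), inl_one]
        exact congrArg (inr _) (Join.mk_zero _ _ _) }
    ((inr _).comp (Join.mk.comp ⟨fun y => (x₀, y, 1), by fun_prop⟩))
    (fun _ _ => by simpa [projI_of_le_zero] using inl_zero _ _)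
    (fun p => by
      change (if ((1 : I) : ℝ) ≤ 1 / 2 then _ else _) = _
      rw [if_neg (by norm_num), Set.Icc.coe_one, show (2 : ℝ) * 1 - 1 = 1 by norm_num,
        projI_of_one_le le_rfl]
      exact congrArg (inr _) (Join.mk_one _ _ _))

lemma sndToJoin_inl (x₀ : X) (y₀ : Y) (p : X × Y) (s : I) :
    sndToJoin x₀ y₀ (inl _ (p, s)) = if (s : ℝ) ≤ 1 / 2 then inl _ (p.1, projI (2 * s))
      else inr _ (Join.mk (p.1, p.2, projI (2 * s - 1))) := rfl

theorem joinToSnd_comp_sndToJoin_homotopic (x₀ : X) (y₀ : Y) :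
    ((joinToSnd y₀).comp (sndToJoin x₀ y₀)).Homotopic (ContinuousMap.id _) := by
  let G : (((joinToSnd y₀).comp (sndToJoin x₀ y₀)).comp (inl _)).Homotopy
      ((ContinuousMap.id _).comp (inl _)) :=
    { toFun q := inl _ (q.2.1, projI (q.2.2 - (1 - q.1) * (1 - q.2.2)))
      map_zero_left := by
        rintro ⟨p, s⟩
        simp only [comp_apply, sndToJoin_inl, Set.Icc.coe_zero, sub_zero, one_mul]
        split_ifs with hs
        · rw [joinToSnd_inl, projI_of_le_zero (by linarith)]
          exact inl_zero _ _
        · rw [joinToSnd_inr_mk]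
          ring_nf
      map_one_left := by
        rintro ⟨p, s⟩
        simp only [Set.Icc.coe_one, sub_self, zero_mul, sub_zero, projI_coe]
        rfl }
  let H : (((joinToSnd y₀).comp (sndToJoin x₀ y₀)).comp (inr _)).Homotopy
      ((ContinuousMap.id _).comp (inr _)) :=
    (ContinuousMap.Homotopy.refl (inr _)).cast
      (ContinuousMap.ext fun y => (inl_one (x₀, y)).symm) rfl
  refine homotopic_of_homotopies G H (fun t p p' => ?_) (fun t p => ?_)
  · change inl _ (p, projI (0 - (1 - t) * (1 - 0))) = inl _ (p', projI (0 - (1 - t) * (1 - 0)))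
    rw [projI_of_le_zero (by linarith [t.2.2])]
    exact inl_zero _ _
  · change inl _ (p, projI (1 - (1 - t) * (1 - 1))) = inr _ p.2
    rw [sub_self, mul_zero, sub_zero, projI_of_one_le le_rfl, inl_one]

/-- At time `τ`, the part `2 t ≤ 1 - τ` of the join line through `(x, y)` still runs up the cone
on `X`. -/
def sndToJoinCompJoinToSndInr (x₀ : X) (y₀ : Y) :
    (((sndToJoin x₀ y₀).comp (joinToSnd y₀)).comp (inr _)).Homotopy
      ((ContinuousMap.id _).comp (inr _)) :=
  Homotopy.quotLift
    { toFun q := if 2 * (q.2.2.2 : ℝ) ≤ 1 - q.1 then inl _ (q.2.1, projI (q.1 + 2 * q.2.2.2))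
        else inr _ (Join.mk (q.2.1, q.2.2.1, projI ((2 * q.2.2.2 - 1 + q.1) / (1 + q.1))))
      continuous_toFun := by
        refine Continuous.if_le (by fun_prop) ?_ (by fun_prop) (by fun_prop) ?_
        · exact (inr _).continuous.comp (Join.mk.continuous.comp
            ((continuous_fst.comp continuous_snd).prodMk ((continuous_fst.comp
              (continuous_snd.comp continuous_snd)).prodMk (continuous_projI.comp
              (Continuous.div (by fun_prop) (by fun_prop) fun q => by linarith [q.1.2.1])))))
        · intro q hq
          rw [hq, add_sub_cancel, projI_of_one_le le_rfl, inl_one,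
            show (1 : ℝ) - q.1 - 1 + q.1 = 0 by ring, zero_div, projI_of_le_zero le_rfl]
          exact congrArg (inr _) (Join.mk_zero _ _ _)
      map_zero_left := by
        rintro ⟨x, y, t⟩
        change _ = sndToJoin x₀ y₀ (inl _ ((x, y), t))
        dsimp only
        simp only [Set.Icc.coe_zero, sub_zero, zero_add, add_zero, div_one, sndToJoin_inl]
        split_ifs <;> first | rfl | (exfalso; linarith)
      map_one_left := by
        rintro ⟨x, y, t⟩
        change _ = inr _ (Join.mk (x, y, t))
        dsimp only
        simp only [Set.Icc.coe_one, sub_self]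
        split_ifs with ht
        · obtain rfl : t = 0 := Subtype.ext (le_antisymm (by simp; linarith) t.2.1)
          rw [projI_of_one_le (by simp), inl_one]
          exact congrArg (inr _) (Join.mk_zero _ _ _)
        · rw [show (2 * (t : ℝ) - 1 + 1) / (1 + 1) = t by ring, projI_coe] }
    (by
      rintro τ _ _ (⟨x, y, y'⟩ | ⟨x, x', y⟩)
      · have h : 2 * ((0 : I) : ℝ) ≤ 1 - τ := by simp [τ.2.2]
        show (if _ then _ else _) = (if _ then _ else _)
        rw [if_pos h, if_pos h]
      · have h : ¬ 2 * ((1 : I) : ℝ) ≤ 1 - τ := by simp; linarith [τ.2.1]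
        show (if _ then _ else _) = (if _ then _ else _)
        rw [if_neg h, if_neg h, Set.Icc.coe_one, show 2 * 1 - 1 + (τ : ℝ) = 1 + τ by ring,
          div_self (ne_of_gt (by linarith [τ.2.1])), projI_of_one_le le_rfl]
        exact congrArg (inr _) (Join.mk_one _ _ _))

lemma sndToJoinCompJoinToSndInr_apply_mk (x₀ : X) (y₀ : Y) (τ : I) (x : X) (y : Y) (t : I) :
    sndToJoinCompJoinToSndInr x₀ y₀ (τ, Join.mk (x, y, t)) =
      if 2 * (t : ℝ) ≤ 1 - τ then inl _ (x, projI (τ + 2 * t))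
      else inr _ (Join.mk (x, y, projI ((2 * t - 1 + τ) / (1 + τ)))) := rfl

theorem sndToJoin_comp_joinToSnd_homotopic (x₀ : X) (y₀ : Y) :
    ((sndToJoin x₀ y₀).comp (joinToSnd y₀)).Homotopic (ContinuousMap.id _) := by
  let G : (((sndToJoin x₀ y₀).comp (joinToSnd y₀)).comp (inl _)).Homotopy
      ((ContinuousMap.id _).comp (inl _)) :=
    { toFun q := inl _ (q.2.1, projI (q.1 * q.2.2))
      map_zero_left := by
        rintro ⟨x, r⟩
        simp [joinToSnd_inl, sndToJoin_inl, projI_of_le_zero]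
      map_one_left := by
        rintro ⟨x, r⟩
        simp only [Set.Icc.coe_one, one_mul, projI_coe]
        rfl }
  refine homotopic_of_homotopies G (sndToJoinCompJoinToSndInr x₀ y₀) (fun t x x' => ?_)
    (fun t x => ?_)
  · change inl _ (x, projI (t * 0)) = inl _ (x', projI (t * 0))
    rw [mul_zero, projI_of_le_zero le_rfl]
    exact inl_zero _ _
  · change inl _ (x, projI (t * 1)) = sndToJoinCompJoinToSndInr x₀ y₀ (t, Join.mk (x, y₀, 0))
    rw [sndToJoinCompJoinToSndInr_apply_mk, if_pos (by simp [t.2.2]), Set.Icc.coe_zero, mul_zero,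
      add_zero, mul_one]

def sndHomotopyEquivJoinInl (x₀ : X) (y₀ : Y) :
    MappingCone (Prod.snd : X × Y → Y) ≃ₕ MappingCone (Join.inl (X := X) y₀) where
  toFun := sndToJoin x₀ y₀
  invFun := joinToSnd y₀
  left_inv := joinToSnd_comp_sndToJoin_homotopic x₀ y₀
  right_inv := sndToJoin_comp_joinToSnd_homotopic x₀ y₀

end MappingCone

theorem cofibre_of_projection_general (X Y : Type) [TopologicalSpace X] [TopologicalSpace Y]
    (x₀ : X) (y₀ : Y) :
    Nonempty (ContinuousMap.HomotopyEquiv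
      (MappingCone (Prod.snd : X × Y → Y))
      (Wedge (Susp X) (Join X Y) (Susp.pt x₀) (Join.pt x₀ y₀))) := by
  obtain ⟨F⟩ := Join.inl_homotopic_const x₀ y₀
  exact ⟨((MappingCone.sndHomotopyEquivJoinInl x₀ y₀).trans
    (MappingCone.homotopyEquivOfHomotopy F)).trans
    (MappingCone.constHomeomorph x₀ (Join.pt x₀ y₀)).toHomotopyEquiv⟩

/-- For connected pointed (CW) spaces `X`, `Y`, the homotopy cofibre of the
projection `π₂ : X × Y → Y` is homotopy equivalent to `ΣX ∨ (X ∗ Y)`. -/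
theorem cofibre_of_projection (X Y : Type) [TopologicalSpace X] [TopologicalSpace Y]
    [ConnectedSpace X] [ConnectedSpace Y] (x₀ : X) (y₀ : Y) :
    Nonempty (ContinuousMap.HomotopyEquiv
      (MappingCone (Prod.snd : X × Y → Y))
      (Wedge (Susp X) (Join X Y) (Susp.pt x₀) (Join.pt x₀ y₀))) :=
  cofibre_of_projection_general X Y x₀ y₀
end
end

section
/- For 1 ≤ j ≤ k+1, the map Z_{L^{k−1}_{j,m}} → Z_{L^k_{j,m}} of moment-angle complexes induced by the simplicial inclusion L^{k−1}_{j,m} ⊆ L^k_{j,m} is null homotopic. -/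
noncomputable section


/-- The sphere `S^n` as the unit sphere of `ℝ^{n+1}`. -/
def Sph (n : ℕ) : Type := Metric.sphere (0 : EuclideanSpace ℝ (Fin (n + 1))) 1

instance (n : ℕ) : TopologicalSpace (Sph n) :=
  inferInstanceAs (TopologicalSpace (Metric.sphere _ _))

def Sph.pt (n : ℕ) : Sph n :=
  ⟨EuclideanSpace.single 0 1, by simp⟩

/-- The `n`-torus. -/
def Torus (n : ℕ) : Type := Fin n → Circle

instance (n : ℕ) : TopologicalSpace (Torus n) :=
  inferInstanceAs (TopologicalSpace (Fin n → Circle))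

def Torus.pt (n : ℕ) : Torus n := fun _ => 1

/-- Complex projective space `ℂP^n`, as the quotient of `ℂ^{n+1}∖{0}` by scalars. -/
def CP (n : ℕ) : Type :=
  Quot (fun v w : {v : Fin (n + 1) → ℂ // v ≠ 0} =>
    ∃ c : ℂ, c ≠ 0 ∧ (fun i => c * v.1 i) = w.1)

instance (n : ℕ) : TopologicalSpace (CP n) := inferInstanceAs (TopologicalSpace (Quot _))

def CP.pt (n : ℕ) : CP n :=
  Quot.mk _ ⟨fun _ => 1, fun h => one_ne_zero (congrFun h 0)⟩

/-! moment-angle complexes -/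

/-- The moment-angle complex of a collection `K` of faces, as the subspace
`⋃_{σ ∈ K} (D²,S¹)^σ` of `(D²)^V ⊆ ℂ^V`. -/
def ZMA {V : Type} (K : Set (Finset V)) : Set (V → ℂ) :=
  {z | (∀ i, ‖z i‖ ≤ 1) ∧ ∃ σ ∈ K, ∀ i ∉ σ, ‖z i‖ = 1}

/-- The inclusion of moment-angle complexes induced by an inclusion of complexes. -/
def ZMAincl {V : Type} [Fintype V] {K K' : Set (Finset V)} (h : K ⊆ K') :
    C(↥(ZMA K), ↥(ZMA K')) :=
  ⟨fun z => ⟨z.1, z.2.1, z.2.2.imp fun σ hσ => ⟨h hσ.1, hσ.2⟩⟩,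
    Continuous.subtype_mk continuous_subtype_val _⟩

/-- Basepoint `(1,…,1)` of a moment-angle complex (needs `∅ ∈ K`). -/
def ZMA.pt {V : Type} (K : Set (Finset V)) (h : ∅ ∈ K) : ↥(ZMA K) :=
  ⟨fun _ => 1, fun _ => by norm_num, ∅, h, fun _ _ => by norm_num⟩

/-- Quotient of the moment-angle complex by the diagonal circle action. -/
def ZQuot {V : Type} (K : Set (Finset V)) : Type :=
  Quot (fun z w : ↥(ZMA K) => ∃ t : Circle, ∀ i, (t : ℂ) * z.1 i = w.1 i)

instance {V : Type} (K : Set (Finset V)) : TopologicalSpace (ZQuot K) :=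
  inferInstanceAs (TopologicalSpace (Quot _))

/-- The `k`-skeleton (`k : ℤ`, so that `k = -1` gives the empty complex) of the full
simplex on `m` vertices: all faces of cardinality at most `k+1`. -/
def skel (m : ℕ) (k : ℤ) : Set (Finset (Fin m)) := {σ | (σ.card : ℤ) ≤ k + 1}

/-- Basepoint of the moment-angle complex of a skeleton with `k ≥ -1`. -/
def skelPt (m : ℕ) (k : ℤ) (h : 0 ≤ k + 1) : ↥(ZMA (skel m k)) :=
  ZMA.pt _ (by simpa [skel] using h)

/-- The simplicial complexes `L^k_{j,m}`:
`L^k_{0,m} = Δ^k_m` and `L^k_{j,m} = L^k_{j-1,m} ∪ Δ_{[m]∖{m-j+1}}`. -/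
def Lkm (m : ℕ) (k : ℤ) : ℕ → Set (Finset (Fin m))
  | 0 => skel m k
  | j + 1 => Lkm m k j ∪ {σ | ∀ x ∈ σ, (x : ℕ) ≠ m - (j + 1)}

theorem Lkm_mono {m : ℕ} {k k' : ℤ} (h : k ≤ k') (j : ℕ) : Lkm m k j ⊆ Lkm m k' j := by
  induction j with
  | zero =>
      intro σ hσ
      have h1 : (σ.card : ℤ) ≤ k + 1 := hσ
      show (σ.card : ℤ) ≤ k' + 1
      omega
  | succ n ih => rintro σ (hσ | hσ); exacts [Or.inl (ih hσ), Or.inr hσ]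


/-! The inclusion is contracted onto `(1, …, 1)` by moving the coordinates `z 0, …, z (m-1)`
straight to `1` one after the other, coordinate `w` during the time interval `[w, w+1]`.
At any moment at most one coordinate is in motion, so a point of `(D², S¹)^σ` stays in
`(D², S¹)^τ` for `τ` the untouched vertices of `σ` plus the moving one. For `σ ∈ Δ^{k-1}` this
adds at most one vertex. If instead `σ` avoids the vertex `m - i`, then `τ` may be taken to avoid
it until the sweep reaches it; afterwards only the `i ≤ k + 1` vertices `m - i, …, m - 1` are not
yet at `1`. -/

open Finset

lemma mem_Lkm_iff {m : ℕ} {k : ℤ} {j : ℕ} {σ : Finset (Fin m)} :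
    σ ∈ Lkm m k j ↔ σ ∈ skel m k ∨ ∃ i ∈ Icc 1 j, ∀ x ∈ σ, (x : ℕ) ≠ m - i := by
  induction j with
  | zero => simp [Lkm]
  | succ n ih =>
    simp only [Lkm, Set.mem_union, ih, Set.mem_ofPred_eq, mem_Icc]
    constructor
    · rintro ((hσ | ⟨i, hi, hσ⟩) | hσ)
      exacts [.inl hσ, .inr ⟨i, by omega, hσ⟩, .inr ⟨n + 1, by omega, hσ⟩]
    · rintro (hσ | ⟨i, hi, hσ⟩)
      · exact .inl (.inl hσ)
      · rcases eq_or_lt_of_le hi.2 with rfl | hlt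
        exacts [.inr hσ, .inl (.inr ⟨i, by omega, hσ⟩)]

lemma card_filter_le_val {m : ℕ} (a : ℕ) : #{w : Fin m | a ≤ (w : ℕ)} ≤ m - a := by
  have hsplit := card_filter_add_card_filter_not (s := univ) fun w : Fin m => a ≤ (w : ℕ)
  have hlt : #{w : Fin m | ¬a ≤ (w : ℕ)} = min m a := by
    simpa only [not_le] using Fin.card_filter_val_lt
  rw [card_univ, Fintype.card_fin] at hsplit
  omega

lemma card_filter_sub_one_lt_lt_le_one {m : ℕ} (s : ℝ) :
    #{w : Fin m | s - 1 < (w : ℝ) ∧ (w : ℝ) < s} ≤ 1 := by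
  refine card_le_one.mpr fun a ha b hb => ?_
  simp only [mem_filter, mem_univ, true_and] at ha hb
  have hab : (a : ℕ) < b + 1 := by exact_mod_cast (by linarith : ((a : ℕ) : ℝ) < (b : ℕ) + 1)
  have hba : (b : ℕ) < a + 1 := by exact_mod_cast (by linarith : ((b : ℕ) : ℝ) < (a : ℕ) + 1)
  exact Fin.ext (by omega)

section Sweep

variable {m : ℕ}

def sweep (s : ℝ) (z : Fin m → ℂ) : Fin m → ℂ :=
  fun w => z w + (Set.projIcc (0 : ℝ) 1 zero_le_one (s - w) : ℝ) • (1 - z w)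

lemma sweep_of_le {s : ℝ} {w : Fin m} (hw : s ≤ w) (z : Fin m → ℂ) : sweep s z w = z w := by
  simp [sweep, Set.projIcc_of_le_left _ (sub_nonpos.mpr hw)]

lemma sweep_of_add_one_le {s : ℝ} {w : Fin m} (hw : (w : ℝ) + 1 ≤ s) (z : Fin m → ℂ) :
    sweep s z w = 1 := by
  simp [sweep, Set.projIcc_of_right_le _ (le_sub_iff_add_le'.mpr hw)]

lemma sweep_zero (z : Fin m → ℂ) : sweep 0 z = z :=
  funext fun _ => sweep_of_le (Nat.cast_nonneg _) z

lemma sweep_card_eq_one (z : Fin m → ℂ) : sweep m z = 1 :=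
  funext fun w => sweep_of_add_one_le (by exact_mod_cast w.isLt) z

lemma norm_sweep_le {s : ℝ} {z : Fin m → ℂ} {w : Fin m} (hz : ‖z w‖ ≤ 1) :
    ‖sweep s z w‖ ≤ 1 := by
  rw [← mem_closedBall_zero_iff]
  exact (convex_closedBall (0 : ℂ) 1).add_smul_sub_mem (mem_closedBall_zero_iff.mpr hz)
    (by simp) (Set.projIcc (0 : ℝ) 1 zero_le_one (s - w)).2

lemma continuous_sweep : Continuous fun p : ℝ × (Fin m → ℂ) => sweep p.1 p.2 := by
  unfold sweep
  fun_prop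

/-- A sufficient condition for the sweep at time `s` to map `(D², S¹)^σ` into `(D², S¹)^τ`. -/
def SweepMapsFace (s : ℝ) (σ τ : Finset (Fin m)) : Prop :=
  ∀ w ∉ τ, (w ∉ σ ∧ s ≤ w) ∨ (w : ℝ) + 1 ≤ s

def SweepsInto (K K' : Set (Finset (Fin m))) : Prop :=
  ∀ σ ∈ K, ∀ s : ℝ, ∃ τ ∈ K', SweepMapsFace s σ τ

lemma sweep_mem_ZMA {K K' : Set (Finset (Fin m))} (hK : SweepsInto K K') (s : ℝ)
    {z : Fin m → ℂ} (hz : z ∈ ZMA K) : sweep s z ∈ ZMA K' := by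
  obtain ⟨hball, σ, hσ, hsphere⟩ := hz
  obtain ⟨τ, hτ, hστ⟩ := hK σ hσ s
  refine ⟨fun w => norm_sweep_le (hball w), τ, hτ, fun w hw => ?_⟩
  rcases hστ w hw with ⟨hwσ, hsw⟩ | hws
  · rw [sweep_of_le hsw]
    exact hsphere w hwσ
  · simp [sweep_of_add_one_le hws]

def sweepHomotopy {K K' : Set (Finset (Fin m))} (hKK' : K ⊆ K') (hK : SweepsInto K K')
    (hempty : ∅ ∈ K') :
    (ZMAincl hKK').Homotopy (ContinuousMap.const (ZMA K) (ZMA.pt K' hempty)) where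
  toFun p := ⟨sweep (m * p.1) p.2.1, sweep_mem_ZMA hK _ p.2.2⟩
  continuous_toFun := by
    refine (continuous_sweep.comp (f := fun p : unitInterval × ZMA K => ((m : ℝ) * p.1, p.2.1))
      ?_).subtype_mk _
    fun_prop
  map_zero_left z := Subtype.ext <| by
    simp only [Set.Icc.coe_zero, mul_zero]
    exact sweep_zero z.1
  map_one_left z := Subtype.ext <| by
    simp only [Set.Icc.coe_one, mul_one]
    exact sweep_card_eq_one z.1

end Sweep

section Lkm

variable {m : ℕ} {k : ℤ}

lemma exists_sweepMapsFace_of_mem_skel {σ : Finset (Fin m)} (hσ : σ ∈ skel m (k - 1))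
    (s : ℝ) : ∃ τ ∈ skel m k, SweepMapsFace s σ τ := by
  refine ⟨σ ∪ ({w | s - 1 < (w : ℝ) ∧ (w : ℝ) < s} : Finset (Fin m)), ?_, fun w hw => ?_⟩
  · have hcard := card_union_le σ {w : Fin m | s - 1 < (w : ℝ) ∧ (w : ℝ) < s}
    have hmoving := card_filter_sub_one_lt_lt_le_one (m := m) s
    simp only [skel, Set.mem_ofPred_eq] at hσ ⊢
    omega
  · simp only [mem_union, mem_filter, mem_univ, true_and, not_or, not_and, not_lt] at hw
    by_cases hsw : s ≤ w
    · exact .inl ⟨hw.1, hsw⟩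
    · exact .inr (by linarith [not_lt.mp (mt hw.2 hsw)])

lemma exists_sweepMapsFace_of_avoids {j i : ℕ} (hi : i ∈ Icc 1 j) (hj : (j : ℤ) ≤ k + 1)
    {σ : Finset (Fin m)} (hσ : ∀ x ∈ σ, (x : ℕ) ≠ m - i) (s : ℝ) :
    ∃ τ ∈ Lkm m k j, SweepMapsFace s σ τ := by
  by_cases hs : s ≤ (m - i : ℕ)
  · refine ⟨({w | (w : ℕ) ≠ m - i} : Finset (Fin m)),
      mem_Lkm_iff.mpr (.inr ⟨i, hi, by simp⟩), fun w hw => ?_⟩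
    simp only [mem_filter, mem_univ, true_and, not_not] at hw
    exact .inl ⟨fun hwσ => hσ w hwσ hw, by rwa [← hw] at hs⟩
  · refine ⟨({w | m - i ≤ (w : ℕ)} : Finset (Fin m)), mem_Lkm_iff.mpr (.inl ?_),
      fun w hw => .inr ?_⟩
    · have hcard := card_filter_le_val (m := m) (m - i)
      have hij := (mem_Icc.mp hi).2
      simp only [skel, Set.mem_ofPred_eq]
      omega
    · simp only [mem_filter, mem_univ, true_and, not_le] at hw
      have : ((w : ℕ) : ℝ) + 1 ≤ (m - i : ℕ) := by exact_mod_cast hw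
      linarith

lemma Lkm_sweepsInto {j : ℕ} (hj : (j : ℤ) ≤ k + 1) :
    SweepsInto (Lkm m (k - 1) j) (Lkm m k j) := by
  intro σ hσ s
  rcases mem_Lkm_iff.mp hσ with hσ | ⟨i, hi, hσ⟩
  · obtain ⟨τ, hτ, hστ⟩ := exists_sweepMapsFace_of_mem_skel hσ s
    exact ⟨τ, mem_Lkm_iff.mpr (.inl hτ), hστ⟩
  · exact exists_sweepMapsFace_of_avoids hi hj hσ s

end Lkm

/-- For `1 ≤ j ≤ k+1`, the map of moment-angle complexes
`Z_{L^{k−1}_{j,m}} → Z_{L^k_{j,m}}` induced by the simplicial inclusion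
`L^{k−1}_{j,m} ⊆ L^k_{j,m}` is null homotopic. -/
theorem ZLkm_inclusion_null_homotopic (m k j : ℕ) (h2 : j ≤ k + 1) :
    ∃ y : ↥(ZMA (Lkm m (k : ℤ) j)),
      (ZMAincl (Lkm_mono (m := m) (by omega : (k : ℤ) - 1 ≤ (k : ℤ)) j)).Homotopic
        (ContinuousMap.const _ y) := by
  have hempty : ∅ ∈ Lkm m k j := mem_Lkm_iff.mpr <| .inl <| by
    simp only [skel, Set.mem_ofPred_eq, card_empty, Nat.cast_zero]
    omega
  exact ⟨_, ⟨sweepHomotopy _ (Lkm_sweepsInto (by omega)) hempty⟩⟩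
end
end
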